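/- arXiv:1104.3821 — 4 statements merged into one kernel-verified Lean document; each statement's English description precedes it below -/
import Mathlib

section
/- Let A be a unital algebra of multipliers on a reproducing kernel Hilbert space H, let L be a closed subspace of H invariant under all M_f for f ∈ A, and let F = (f_1, ..., f_m) be a tuple of elements of A. Fix points x_1, ..., x_n ∈ X, scalars w_1, ..., w_n ∈ ℂ, and vectors v_1, ..., v_n ∈ ℂ^m, and suppose F(x_i)^* v_i = conj(w_i) for each i (where F(x)^* v = Σ_j conj(f_j(x)) v_j). Let J = { G ∈ A^m : Σ_j conj(g_j(x_i)) (v_i)_j = 0 for all i }. Then the distance from F to J in the column multiplier norm is at least ‖P_L M_F^* restricted to the span of { P_{L⊗ℂ^m}(k_{x_i} ⊗ v_i) : i = 1..n }‖. -/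
/-- Let `A` be a unital algebra of multipliers on a reproducing kernel
Hilbert space `H` (each `f ∈ A` acting via `Mop f`), `L` a closed invariant subspace,
`F = (f_1,…,f_m)` a column over `A` with `F(x_i)* v_i = conj (w i)`, and
`J = {G ∈ A^m : Σ_j conj (G_j(x_i)) (v_i)_j = 0}`.  Then the distance from `F` to `J` in
the column multiplier norm is at least the norm of `P_L M_F*` restricted to
`span{P_{L ⊗ ℂ^m}(k_{x_i} ⊗ v_i)} = span{(v_i)_j • P_L k_{x_i}}`. -/
theorem stmt_4 {X : Type*} {H : Type*} [NormedAddCommGroup H] [InnerProductSpace ℂ H]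
    [CompleteSpace H] (E : H →ₗ[ℂ] (X → ℂ)) (hE : Function.Injective E)
    (k : X → H) (hk : ∀ (f : H) (x : X), E f x = (inner ℂ (k x) f : ℂ))
    (A : Subalgebra ℂ (X → ℂ)) (Mop : (X → ℂ) → (H →L[ℂ] H))
    (hMop : ∀ f ∈ A, ∀ (h : H) (x : X), E (Mop f h) x = f x * E h x)
    (L : Submodule ℂ H) [CompleteSpace L]
    (hinv : ∀ f ∈ A, ∀ h ∈ L, Mop f h ∈ L)
    (m n : ℕ) (F : Fin m → X → ℂ) (hF : ∀ j, F j ∈ A)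
    (x : Fin n → X) (w : Fin n → ℂ) (v : Fin n → EuclideanSpace ℂ (Fin m))
    (hFv : ∀ i : Fin n, ∑ j, (starRingEnd ℂ) (F j (x i)) * v i j = (starRingEnd ℂ) (w i)) :
    letI : CompleteSpace (PiLp 2 (fun _ : Fin m => H)) :=
      inferInstance
    let col : (Fin m → X → ℂ) → (H →L[ℂ] PiLp 2 (fun _ : Fin m => H)) := fun G =>
      ((PiLp.continuousLinearEquiv 2 ℂ (fun _ : Fin m => H)).symm.toContinuousLinearMap).comp
        (ContinuousLinearMap.pi fun j => Mop (G j))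
    let Jset : Set (Fin m → X → ℂ) :=
      {G | (∀ j, G j ∈ A) ∧ ∀ i : Fin n, ∑ j, (starRingEnd ℂ) (G j (x i)) * v i j = 0}
    let S : Submodule ℂ (PiLp 2 (fun _ : Fin m => H)) :=
      Submodule.span ℂ (Set.range fun i : Fin n =>
        (WithLp.equiv 2 (∀ _ : Fin m, H)).symm
          (fun j => v i j • (L.orthogonalProjectionOnto (k (x i)) : H)))
    ‖((L.orthogonalProjectionOnto).comp
          (ContinuousLinearMap.adjoint (col F))).comp (Submodule.subtypeL S)‖ ≤
      Metric.infDist (col F) (col '' Jset) := by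
  intro col Jset S
  letI : CompleteSpace (PiLp 2 (fun _ : Fin m => H)) :=
    inferInstance
  -- kernel functional property of adjoints of multipliers
  have hadjK : ∀ f ∈ A, ∀ y : X,
      ContinuousLinearMap.adjoint (Mop f) (k y) = (starRingEnd ℂ) (f y) • k y := by
    intro f hf y
    apply ext_inner_right ℂ
    intro h
    rw [ContinuousLinearMap.adjoint_inner_left, inner_smul_left]
    rw [← hk, hMop f hf, hk]
    simp [mul_comm]
  -- adjoint of a multiplier maps Lᗮ into Lᗮ
  have hadjPerp : ∀ f ∈ A, ∀ u ∈ Lᗮ, ContinuousLinearMap.adjoint (Mop f) u ∈ Lᗮ := by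
    intro f hf u hu
    rw [Submodule.mem_orthogonal]
    intro z hz
    rw [ContinuousLinearMap.adjoint_inner_right]
    exact (Submodule.mem_orthogonal L u).mp hu _ (hinv f hf z hz)
  -- compression formula: P_L (Mop f)* (P_L k_y) = conj (f y) • P_L k_y
  have hcomp : ∀ f ∈ A, ∀ y : X,
      L.orthogonalProjectionOnto (ContinuousLinearMap.adjoint (Mop f)
        (L.orthogonalProjectionOnto (k y) : H))
      = (starRingEnd ℂ) (f y) • L.orthogonalProjectionOnto (k y) := by
    intro f hf y
    have hsplit : (L.orthogonalProjectionOnto (k y) : H)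
        = k y - (k y - (L.orthogonalProjectionOnto (k y) : H)) := (sub_sub_cancel _ _).symm
    rw [hsplit, map_sub, map_sub, hadjK f hf y, map_smul,
      Submodule.orthogonalProjectionOnto_apply_of_mem_orthogonal
        (hadjPerp f hf _ (show k y - (L.orthogonalProjectionOnto (k y) : H) ∈ Lᗮ from
            L.sub_starProjection_mem_orthogonal (k y))),
      sub_zero]
  -- adjoint of a column applied to a vector
  have hadjCol : ∀ (G : Fin m → X → ℂ) (u : PiLp 2 (fun _ : Fin m => H)),
      ContinuousLinearMap.adjoint (col G) u
        = ∑ j, ContinuousLinearMap.adjoint (Mop (G j)) (u j) := by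
    intro G u
    apply ext_inner_right ℂ
    intro h
    rw [ContinuousLinearMap.adjoint_inner_left, sum_inner]
    simp only [col, ContinuousLinearMap.comp_apply, PiLp.inner_apply]
    congr 1
    ext j
    rw [ContinuousLinearMap.adjoint_inner_left]
    congr 1
  -- for G in Jset, P_L (col G)* vanishes on S
  have hker : ∀ G ∈ Jset, ∀ s ∈ S,
      L.orthogonalProjectionOnto (ContinuousLinearMap.adjoint (col G) s) = 0 := by
    intro G hG s hs
    induction hs using Submodule.span_induction with
    | mem s hs =>
      obtain ⟨i, rfl⟩ := hs
      rw [hadjCol, map_sum]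
      have : ∀ j : Fin m,
          L.orthogonalProjectionOnto (ContinuousLinearMap.adjoint (Mop (G j))
            (((WithLp.equiv 2 (∀ _ : Fin m, H)).symm
              (fun j => v i j • (L.orthogonalProjectionOnto (k (x i)) : H))) j))
          = ((starRingEnd ℂ) (G j (x i)) * v i j) • L.orthogonalProjectionOnto (k (x i)) := by
        intro j
        have : ((WithLp.equiv 2 (∀ _ : Fin m, H)).symm
            (fun j => v i j • (L.orthogonalProjectionOnto (k (x i)) : H))) j
            = v i j • (L.orthogonalProjectionOnto (k (x i)) : H) := rfl
        rw [this, map_smul, map_smul, hcomp (G j) (hG.1 j) (x i), smul_smul, mul_comm]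
      rw [Finset.sum_congr rfl (fun j _ => this j), ← Finset.sum_smul, hG.2 i, zero_smul]
    | zero => simp
    | add a b _ _ ha hb => rw [map_add, map_add, ha, hb, add_zero]
    | smul c a _ ha => rw [map_smul, map_smul, ha, smul_zero]
  -- reduce infDist
  have hJne : (col '' Jset).Nonempty := by
    refine ⟨col 0, Set.mem_image_of_mem _ ⟨fun j => ?_, fun i => by simp⟩⟩
    simpa using Subalgebra.zero_mem A
  by_contra hlt
  push_neg at hlt
  obtain ⟨y, hy, hdy⟩ := (Metric.infDist_lt_iff hJne).mp hlt
  obtain ⟨G, hG, rfl⟩ := hy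
  -- the operator norm bound
  have hbound : ‖((L.orthogonalProjectionOnto).comp
      (ContinuousLinearMap.adjoint (col F))).comp (Submodule.subtypeL S)‖
      ≤ dist (col F) (col G) := by
    refine ContinuousLinearMap.opNorm_le_bound _ dist_nonneg (fun s => ?_)
    have hF0 : L.orthogonalProjectionOnto (ContinuousLinearMap.adjoint (col F) (s : _))
        = L.orthogonalProjectionOnto
            (ContinuousLinearMap.adjoint (col F - col G) (s : _)) := by
      rw [map_sub, ContinuousLinearMap.sub_apply, map_sub, hker G hG s s.2, sub_zero]
    simp only [ContinuousLinearMap.comp_apply, Submodule.subtypeL_apply]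
    rw [hF0]
    calc ‖L.orthogonalProjectionOnto (ContinuousLinearMap.adjoint (col F - col G) (s : _))‖
        ≤ 1 * ‖ContinuousLinearMap.adjoint (col F - col G) (s : _)‖ := by
          refine le_trans ((L.orthogonalProjectionOnto).le_opNorm _) ?_
          exact mul_le_mul_of_nonneg_right (Submodule.orthogonalProjectionOnto_norm_le L) (norm_nonneg _)
      _ = ‖ContinuousLinearMap.adjoint (col F - col G) (s : _)‖ := one_mul _
      _ ≤ ‖ContinuousLinearMap.adjoint (col F - col G)‖ * ‖(s : _)‖ :=
          ContinuousLinearMap.le_opNorm _ _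
      _ = ‖col F - col G‖ * ‖(s : _)‖ := by
          rw [LinearIsometryEquiv.norm_map]
      _ = dist (col F) (col G) * ‖s‖ := by
          rw [show dist (col F) (col G) = ‖col F - col G‖ from by exact dist_eq_norm (col F) (col G)]
  exact absurd (lt_of_le_of_lt hbound hdy) (lt_irrefl _)
end

section
/- Let H be a reproducing kernel Hilbert space on X with kernel K, let L be a closed subspace of H with kernel K^L(x,y) = ⟨P_L k_y, k_x⟩, and let F = (f_1,...,f_m) be a column of multipliers of H leaving L invariant. Fix points x_1,...,x_n ∈ X, scalars w_1,...,w_n ∈ ℂ, vectors v_1,...,v_n ∈ ℂ^m, and suppose M_F^*(k^L_{x_i} ⊗ v_i) = conj(w_i) k^L_{x_i} for each i. Then the restriction of (P_L ⊗ I) M_F^* to M_L = span{ k^L_{x_i} ⊗ v_i : i=1..n } is a contraction if and only if the n×n matrix [ (⟨v_j, v_i⟩ − w_i conj(w_j)) K^L(x_i, x_j) ] is positive semidefinite. -/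
/-!
Because `M_F^*(k^L_{x_i} ⊗ v_i) = conj(w_i) k^L_{x_i}` already lies in `L`, the matrix
`[(⟨v_j, v_i⟩ − w_i conj(w_j)) K^L(x_i, x_j)]` is `gram(u) − gram(T u)` for
`u_i = k^L_{x_i} ⊗ v_i` and `T = P_L M_F^*`. For any linear map `T`, the quadratic form of
`gram(u) − gram(T u)` at `c` is `‖Σ c_i u_i‖² − ‖T (Σ c_i u_i)‖²`, so this matrix is positive
semidefinite exactly when `T` is contractive on `span{u_i}`.
-/

open scoped ComplexOrder
open Matrix

section Gram

variable {𝕜 E F ι : Type*} [RCLike 𝕜] [NormedAddCommGroup E] [InnerProductSpace 𝕜 E]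
  [NormedAddCommGroup F] [InnerProductSpace 𝕜 F] [Fintype ι]

theorem star_dotProduct_gram_sub_gram_comp_mulVec (T : E →ₗ[𝕜] F) (u : ι → E) (c : ι → 𝕜) :
    star c ⬝ᵥ (gram 𝕜 u - gram 𝕜 (T ∘ u)) *ᵥ c =
      ((‖∑ i, c i • u i‖ ^ 2 - ‖T (∑ i, c i • u i)‖ ^ 2 : ℝ) : 𝕜) := by
  rw [sub_mulVec, dotProduct_sub, star_dotProduct_gram_mulVec, star_dotProduct_gram_mulVec]
  simp only [Function.comp_apply, ← map_smul, ← map_sum, inner_self_eq_norm_sq_to_K]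
  push_cast
  rfl

theorem forall_norm_le_on_span_iff_posSemidef_gram_sub_gram (T : E →ₗ[𝕜] F) (u : ι → E) :
    (∀ y ∈ Submodule.span 𝕜 (Set.range u), ‖T y‖ ≤ ‖y‖) ↔
      (gram 𝕜 u - gram 𝕜 (T ∘ u)).PosSemidef := by
  simp only [posSemidef_iff_dotProduct_mulVec, (isHermitian_gram 𝕜 u).sub (isHermitian_gram 𝕜 _),
    true_and, star_dotProduct_gram_sub_gram_comp_mulVec, RCLike.ofReal_nonneg, sub_nonneg,
    Submodule.mem_span_range_iff_exists_fun, forall_exists_index, forall_apply_eq_imp_iff]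
  exact forall_congr' fun c =>
    (pow_le_pow_iff_left₀ (norm_nonneg _) (norm_nonneg _) two_ne_zero).symm

end Gram

theorem PiLp.inner_equiv_symm_smul {𝕜 E ι : Type*} [RCLike 𝕜] [NormedAddCommGroup E]
    [InnerProductSpace 𝕜 E] [Fintype ι] (a b : EuclideanSpace 𝕜 ι) (x y : E) :
    inner 𝕜 ((WithLp.equiv 2 (ι → E)).symm fun j => a j • x)
      ((WithLp.equiv 2 (ι → E)).symm fun j => b j • y) = inner 𝕜 a b * inner 𝕜 x y := by
  simp only [PiLp.inner_apply, WithLp.equiv_symm_apply, inner_smul_left,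
    inner_smul_right, RCLike.inner_apply, Finset.sum_mul]
  exact Finset.sum_congr rfl fun _ _ => by ring

theorem stmt_5_general {X : Type*} {H : Type*} [NormedAddCommGroup H] [InnerProductSpace ℂ H]
    [CompleteSpace H] (k : X → H)
    (L : Submodule ℂ H) [CompleteSpace L]
    (m n : ℕ) (Mf : Fin m → (H →L[ℂ] H))
    (x : Fin n → X) (w : Fin n → ℂ) (v : Fin n → EuclideanSpace ℂ (Fin m)) :
    letI : CompleteSpace (PiLp 2 (fun _ : Fin m => H)) :=
      inferInstance
    let colF : H →L[ℂ] PiLp 2 (fun _ : Fin m => H) :=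
      ((PiLp.continuousLinearEquiv 2 ℂ (fun _ : Fin m => H)).symm.toContinuousLinearMap).comp
        (ContinuousLinearMap.pi fun j => Mf j)
    let kL : Fin n → H := fun i => (L.orthogonalProjectionOnto (k (x i)) : H)
    let kv : Fin n → PiLp 2 (fun _ : Fin m => H) := fun i =>
      (WithLp.equiv 2 (∀ _ : Fin m, H)).symm (fun j => v i j • kL i)
    (∀ i : Fin n, ContinuousLinearMap.adjoint colF (kv i) = (starRingEnd ℂ) (w i) • kL i) →
    ((∀ u ∈ Submodule.span ℂ (Set.range kv),
        ‖(L.orthogonalProjectionOnto (ContinuousLinearMap.adjoint colF u) : H)‖ ≤ ‖u‖) ↔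
      Matrix.PosSemidef (Matrix.of fun i j : Fin n =>
        ((inner ℂ (v i) (v j) : ℂ) - w i * (starRingEnd ℂ) (w j)) *
          (inner ℂ (k (x i)) (kL j) : ℂ))) := by
  intro colF kL kv hadj
  let T := L.subtypeL ∘L L.orthogonalProjectionOnto ∘L colF.adjoint
  have hkL_mem : ∀ i, kL i ∈ L := fun i => (L.orthogonalProjectionOnto (k (x i))).2
  have hT : ∀ i, T (kv i) = starRingEnd ℂ (w i) • kL i := by
    intro i
    change (L.orthogonalProjectionOnto (colF.adjoint (kv i)) : H) = _
    rw [hadj i, Submodule.coe_orthogonalProjectionOnto_apply, Submodule.starProjection_eq_self_iff]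
    exact L.smul_mem _ (hkL_mem i)
  have hkernel : ∀ i j, inner ℂ (k (x i)) (kL j) = inner ℂ (kL i) (kL j) := fun i j =>
    (L.inner_orthogonalProjectionOnto_eq_of_mem_right _ _).symm
  have hmatrix : Matrix.of (fun i j : Fin n =>
      ((inner ℂ (v i) (v j) : ℂ) - w i * starRingEnd ℂ (w j)) * (inner ℂ (k (x i)) (kL j) : ℂ)) =
      gram ℂ kv - gram ℂ (T ∘ kv) := by
    ext i j
    rw [of_apply, Matrix.sub_apply, gram_apply, gram_apply, Function.comp_apply,
      Function.comp_apply, hT, hT, inner_smul_left, inner_smul_right, Complex.conj_conj,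
      PiLp.inner_equiv_symm_smul, hkernel]
    ring
  rw [hmatrix]
  exact forall_norm_le_on_span_iff_posSemidef_gram_sub_gram (T : _ →ₗ[ℂ] H) kv

/-- Let `L` be a closed subspace of a reproducing kernel Hilbert space `H`
invariant under the multipliers `f_1,…,f_m` of the column `F`, with kernel
`K^L(x,y) = ⟨P_L k_y, k_x⟩`.  Given points `x i`, scalars `w i` and vectors
`v i ∈ ℂ^m` with `M_F*(k^L_{x_i} ⊗ v_i) = conj (w i) • k^L_{x_i}`, the restriction of
`P_L M_F*` to `M_L = span{k^L_{x_i} ⊗ v_i}` is a contraction iff the `n×n` matrix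
`[(⟨v_j, v_i⟩ − w_i conj w_j) K^L(x_i, x_j)]` is positive semidefinite. -/
theorem stmt_5 {X : Type*} {H : Type*} [NormedAddCommGroup H] [InnerProductSpace ℂ H]
    [CompleteSpace H] (E : H →ₗ[ℂ] (X → ℂ)) (hE : Function.Injective E)
    (k : X → H) (hk : ∀ (f : H) (x : X), E f x = (inner ℂ (k x) f : ℂ))
    (L : Submodule ℂ H) [CompleteSpace L]
    (m n : ℕ) (f : Fin m → X → ℂ) (Mf : Fin m → (H →L[ℂ] H))
    (hMf : ∀ (j : Fin m) (h : H) (x : X), E (Mf j h) x = f j x * E h x)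
    (hinv : ∀ (j : Fin m), ∀ h ∈ L, Mf j h ∈ L)
    (x : Fin n → X) (w : Fin n → ℂ) (v : Fin n → EuclideanSpace ℂ (Fin m)) :
    letI : CompleteSpace (PiLp 2 (fun _ : Fin m => H)) :=
      inferInstance
    let colF : H →L[ℂ] PiLp 2 (fun _ : Fin m => H) :=
      ((PiLp.continuousLinearEquiv 2 ℂ (fun _ : Fin m => H)).symm.toContinuousLinearMap).comp
        (ContinuousLinearMap.pi fun j => Mf j)
    let kL : Fin n → H := fun i => (L.orthogonalProjectionOnto (k (x i)) : H)
    let kv : Fin n → PiLp 2 (fun _ : Fin m => H) := fun i =>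
      (WithLp.equiv 2 (∀ _ : Fin m, H)).symm (fun j => v i j • kL i)
    (∀ i : Fin n, ContinuousLinearMap.adjoint colF (kv i) = (starRingEnd ℂ) (w i) • kL i) →
    ((∀ u ∈ Submodule.span ℂ (Set.range kv),
        ‖(L.orthogonalProjectionOnto (ContinuousLinearMap.adjoint colF u) : H)‖ ≤ ‖u‖) ↔
      Matrix.PosSemidef (Matrix.of fun i j : Fin n =>
        ((inner ℂ (v i) (v j) : ℂ) - w i * (starRingEnd ℂ) (w j)) *
          (inner ℂ (k (x i)) (kL j) : ℂ))) :=
  stmt_5_general k L m n Mf x w v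
end

section
/- Let A be a unital algebra of complex-valued functions on a finite set E = {x_1, ..., x_n}. Define x_i ∼ x_j iff f(x_i) = f(x_j) for all f ∈ A, and let X_1, ..., X_p be the equivalence classes. Then there exist e_1, ..., e_p ∈ A such that Σ_k e_k = 1 and e_k restricted to X_k is identically 1 and e_k restricted to X_l (l ≠ k) is identically 0. -/
/-!
If `f ∈ A` separates `x` from `y`, the affine rescaling `(f - f y) / (f x - f y)` lies in the
unital algebra `A`, equals `1` at `x` and `0` at `y`. Multiplying such functions over all
points `y` separated from `x` gives `e x ∈ A` with `e x x = 1` that vanishes off the class of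
`x`; and every element of `A`, in particular `e x`, is constant on that class.
-/

namespace Subalgebra

variable {K E : Type*} [Field K]

theorem exists_mem_apply_eq_one_apply_eq_zero (A : Subalgebra K (E → K)) {x y : E}
    (hxy : ¬ ∀ f ∈ A, f x = f y) : ∃ g ∈ A, g x = 1 ∧ g y = 0 := by
  push Not at hxy
  obtain ⟨f, hf, hne⟩ := hxy
  refine ⟨(f x - f y)⁻¹ • (f - algebraMap K (E → K) (f y)),
    A.smul_mem (A.sub_mem hf (A.algebraMap_mem _)) _, ?_, ?_⟩
  · simp [inv_mul_cancel₀ (sub_ne_zero.mpr hne)]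
  · simp

theorem exists_mem_apply_eq_one_forall_eq_zero [Fintype E] (A : Subalgebra K (E → K)) (x : E) :
    ∃ e ∈ A, e x = 1 ∧ ∀ y, (¬ ∀ f ∈ A, f x = f y) → e y = 0 := by
  classical
  have separating : ∀ y, ∃ g ∈ A, g x = 1 ∧ ((¬ ∀ f ∈ A, f x = f y) → g y = 0) := by
    intro y
    by_cases hxy : ∀ f ∈ A, f x = f y
    · exact ⟨1, A.one_mem, rfl, fun h => absurd hxy h⟩
    · obtain ⟨g, hg, hgx, hgy⟩ := A.exists_mem_apply_eq_one_apply_eq_zero hxy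
      exact ⟨g, hg, hgx, fun _ => hgy⟩
  choose g hgA hgx hgy using separating
  refine ⟨∏ y, g y, A.prod_mem fun y _ => hgA y, ?_, fun y hxy => ?_⟩
  · simp [Finset.prod_apply, hgx]
  · rw [Finset.prod_apply]
    exact Finset.prod_eq_zero (Finset.mem_univ y) (hgy y hxy)

end Subalgebra

/-- If `A` is a unital algebra of complex-valued functions on a finite set
`E`, and `x ∼ y` iff `f x = f y` for all `f ∈ A`, then there is a partition of unity in
`A` indexed by the points: for each `x` a function `e x ∈ A` which is identically `1` on
the equivalence class of `x` and identically `0` on every other class.  (Summing `e` over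
a set of representatives of the classes then gives `Σ_k e_k = 1`.) -/
theorem stmt_6 {E : Type*} [Fintype E] (A : Subalgebra ℂ (E → ℂ)) :
    ∃ e : E → (E → ℂ), ∀ x : E,
      e x ∈ A ∧
      (∀ y : E, (∀ f ∈ A, f x = f y) → e x y = 1) ∧
      (∀ y : E, ¬ (∀ f ∈ A, f x = f y) → e x y = 0) := by
  choose e heA hex hey using A.exists_mem_apply_eq_one_forall_eq_zero
  exact ⟨e, fun x => ⟨heA x, fun y hxy => (hxy _ (heA x)).symm.trans (hex x), hey x⟩⟩
end

section
/- Let H be a reproducing kernel Hilbert space on X and A a unital algebra of multipliers on H. Fix points x_1,...,x_n ∈ X, nonzero vectors v_1,...,v_n in a Hilbert space E, and let J = { G ∈ C(A) : ⟨G(x_i), v_i⟩ = 0 for all i }, a subspace of the column space C(A) over E. If h ∈ H satisfies h(x_i) ≠ 0 for all i, and A separates the points x_1,...,x_n, then with L = closure(A·h), the space closure(C(A)·h) ⊖ closure(J·h) equals span{ P_L k_{x_i} ⊗ v_i : i = 1..n }. -/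
/-!
For `T ∈ C(A)` with entries `G j`, the reproducing property gives
`⟪v ⊗ k_y, T u⟫ = ⟨v, G(y)⟩ · u(y)`, and the entries of `T h` lie in `L`, so `k_{x_i}` may be
replaced by `P_L k_{x_i}`. As `h(x_i) ≠ 0`, evaluation at `h` therefore identifies `J·h` with the
vectors of `M := C(A)·h` orthogonal to `W := span {v_i ⊗ P_L k_{x_i}}`, and `W ≤ closure M`
because `L ⊗ v_i ≤ closure M`. The theorem is then an instance of a Hilbert-space fact: if `W` is
finite-dimensional and `W ≤ closure M`, then `closure (M ⊓ Wᗮ) = closure M ⊓ Wᗮ`, hence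
`closure M ⊖ closure (M ⊓ Wᗮ) = W`.
-/

open scoped ComplexConjugate ENNReal

namespace Submodule

variable {𝕜 K : Type*} [RCLike 𝕜] [NormedAddCommGroup K] [InnerProductSpace 𝕜 K]

theorem mem_orthogonal_span_range_iff {ι : Type*} {w : ι → K} {z : K} :
    z ∈ (span 𝕜 (Set.range w))ᗮ ↔ ∀ i, inner 𝕜 (w i) z = 0 := by
  rw [← span_singleton_le_iff_mem, ← isOrtho_iff_le, isOrtho_comm, isOrtho_span]
  simp

theorem range_orthogonalProjectionOnto_comp_subtypeL_eq_top {M W : Submodule 𝕜 K}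
    [FiniteDimensional 𝕜 W] (hW : W ≤ M.topologicalClosure) :
    (W.orthogonalProjectionOnto ∘L M.subtypeL).range = ⊤ := by
  set R := (W.orthogonalProjectionOnto ∘L M.subtypeL).range
  have hR : IsClosed (R : Set W) := R.closed_of_finiteDimensional
  refine eq_top_iff.2 fun w _ => ?_
  have hw : W.orthogonalProjectionOnto (w : K) ∈ closure (R : Set W) :=
    map_mem_closure W.orthogonalProjectionOnto.continuous (hW w.2)
      fun y hy => ⟨⟨y, hy⟩, rfl⟩
  rwa [orthogonalProjectionOnto_mem_subspace_eq_self, hR.closure_eq] at hw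

theorem topologicalClosure_inf_orthogonal_eq {M W : Submodule 𝕜 K}
    [FiniteDimensional 𝕜 W] (hW : W ≤ M.topologicalClosure) :
    (M ⊓ Wᗮ).topologicalClosure = M.topologicalClosure ⊓ Wᗮ := by
  refine le_antisymm (topologicalClosure_minimal _
    (inf_le_inf_right _ M.le_topologicalClosure)
    (M.isClosed_topologicalClosure.inter W.isClosed_orthogonal)) fun y hy => ?_
  obtain ⟨σ, hσ⟩ := (W.orthogonalProjectionOnto ∘L M.subtypeL).exists_rightInverse_of_surjective
    (range_orthogonalProjectionOnto_comp_subtypeL_eq_top hW)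
  -- `y ↦ y - σ (P_W y)` maps `M` into `M ⊓ Wᗮ` and fixes `Wᗮ`
  set φ : K →L[𝕜] K := .id 𝕜 K - M.subtypeL ∘L σ ∘L W.orthogonalProjectionOnto
  have hσ' (z : K) : W.orthogonalProjectionOnto (σ (W.orthogonalProjectionOnto z) : K) =
      W.orthogonalProjectionOnto z := congr($hσ (W.orthogonalProjectionOnto z))
  have hφ : Set.MapsTo φ M (M ⊓ Wᗮ) := fun z hz => by
    refine ⟨M.sub_mem hz (σ _).2, orthogonalProjectionOnto_eq_zero_iff.1 ?_⟩
    simp [φ, hσ']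
  have hφy : φ y = y := by
    simp [φ, orthogonalProjectionOnto_eq_zero_iff.2 hy.2]
  rw [← hφy]
  exact map_mem_closure φ.continuous hy.1 hφ

theorem topologicalClosure_inf_orthogonal_topologicalClosure_inf_orthogonal_eq
    {M W : Submodule 𝕜 K} [FiniteDimensional 𝕜 W] (hW : W ≤ M.topologicalClosure) :
    M.topologicalClosure ⊓ (M ⊓ Wᗮ).topologicalClosureᗮ = W := by
  have hWN : W ≤ (Wᗮ ⊓ M.topologicalClosure)ᗮ :=
    W.le_orthogonal_orthogonal.trans (orthogonal_le inf_le_left)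
  rw [topologicalClosure_inf_orthogonal_eq hW, inf_comm M.topologicalClosure Wᗮ]
  nth_rewrite 1 [← sup_orthogonal_inf_of_hasOrthogonalProjection hW]
  rw [sup_inf_assoc_of_le _ hWN, inf_orthogonal_eq_bot, sup_bot_eq]

end Submodule

namespace lp

variable {𝕜 ι H : Type*} [RCLike 𝕜] [NormedAddCommGroup H]

section Tensor

variable [NormedSpace 𝕜 H] {p : ℝ≥0∞}

theorem memℓp_smul_const (c : lp (fun _ : ι => 𝕜) p) (u : H) : Memℓp (fun j => c j • u) p :=
  ((lp.memℓp c).norm.const_mul ‖u‖).mono fun j => by rw [norm_smul, mul_comm]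

variable [Fact (1 ≤ p)]

noncomputable def tensorCLM (c : lp (fun _ : ι => 𝕜) p) : H →L[𝕜] lp (fun _ : ι => H) p :=
  LinearMap.mkContinuous
    { toFun u := ⟨fun j => c j • u, memℓp_smul_const c u⟩
      map_add' u w := lp.ext <| funext fun j => smul_add _ _ _
      map_smul' a u := lp.ext <| funext fun j => smul_comm _ _ _ } ‖c‖
    fun u => by
      have hp : p ≠ 0 := (zero_lt_one.trans_le Fact.out).ne'
      calc _ ≤ ‖(‖u‖ : 𝕜) • c‖ := lp.norm_mono hp fun j => by simp [norm_smul, mul_comm]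
        _ = ‖c‖ * ‖u‖ := by rw [lp.norm_const_smul hp, RCLike.norm_ofReal, abs_norm, mul_comm]

@[simp] theorem tensorCLM_apply (c : lp (fun _ : ι => 𝕜) p) (u : H) (j : ι) :
    tensorCLM c u j = c j • u := rfl

end Tensor

variable [InnerProductSpace 𝕜 H]

theorem inner_tensorCLM_left (c : lp (fun _ : ι => 𝕜) 2) (u : H) (ξ : lp (fun _ : ι => H) 2) :
    inner 𝕜 (tensorCLM c u) ξ = ∑' j, conj (c j) * inner 𝕜 u (ξ j) := by
  simp only [lp.inner_eq_tsum, tensorCLM_apply, inner_smul_left]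

theorem inner_tensorCLM_left_eq_of_sub_mem_orthogonal {L : Submodule 𝕜 H} {u u' : H}
    (hu : u - u' ∈ Lᗮ) (c : lp (fun _ : ι => 𝕜) 2) {ξ : lp (fun _ : ι => H) 2}
    (hξ : ∀ j, ξ j ∈ L) : inner 𝕜 (tensorCLM c u) ξ = inner 𝕜 (tensorCLM c u') ξ := by
  simp only [inner_tensorCLM_left]
  refine tsum_congr fun j => congrArg _ ?_
  rw [← sub_eq_zero, ← inner_sub_left]
  exact (L.mem_orthogonal' _).1 hu _ (hξ j)

end lp

section MultiplierColumns

variable {X H ι κ : Type*} [NormedAddCommGroup H] [InnerProductSpace ℂ H]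
  {E : H →ₗ[ℂ] (X → ℂ)} {A : Subalgebra ℂ (X → ℂ)} {Mop : (X → ℂ) → (H →L[ℂ] H)}

variable (ι E A) in
/-- The column space `C(A)`: operators `u ↦ (M_{G j} u)_j` with every `G j ∈ A`. -/
def multiplierColumns : Submodule ℂ (H →L[ℂ] lp (fun _ : ι => H) 2) where
  carrier := {T | ∃ G : ι → X → ℂ, (∀ j, G j ∈ A) ∧
    ∀ (u : H) (y : X) (j : ι), E ((T u) j) y = G j y * E u y}
  zero_mem' := ⟨0, fun _ => zero_mem A, fun u y j => by simp⟩
  add_mem' := by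
    rintro S T ⟨F, hFA, hF⟩ ⟨G, hGA, hG⟩
    exact ⟨F + G, fun j => add_mem (hFA j) (hGA j), fun u y j => by simp [hF, hG, add_mul]⟩
  smul_mem' := by
    rintro a T ⟨G, hGA, hG⟩
    exact ⟨a • G, fun j => SMulMemClass.smul_mem a (hGA j), fun u y j => by simp [hG, mul_assoc]⟩

variable (E A) in
/-- The subspace `J = {G ∈ C(A) : ⟨G(x_i), v_i⟩ = 0 for all i}`. -/
def vanishingColumns (x : κ → X) (v : κ → lp (fun _ : ι => ℂ) 2) :
    Set (H →L[ℂ] lp (fun _ : ι => H) 2) :=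
  {T | ∃ G : ι → X → ℂ, (∀ j, G j ∈ A) ∧
    (∀ (u : H) (y : X) (j : ι), E ((T u) j) y = G j y * E u y) ∧
    ∀ i, ∑' j, conj (v i j) * G j (x i) = 0}

variable (ι E A) in
noncomputable def multiplierColumnsApply (u : H) : Submodule ℂ (lp (fun _ : ι => H) 2) :=
  (multiplierColumns ι E A).map (ContinuousLinearMap.apply ℂ (lp (fun _ : ι => H) 2) u).toLinearMap

theorem coe_multiplierColumnsApply (u : H) :
    (multiplierColumnsApply ι E A u : Set (lp (fun _ : ι => H) 2)) =
      {z | ∃ T ∈ multiplierColumns ι E A, z = T u} := by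
  ext z
  simp only [multiplierColumnsApply, SetLike.mem_coe, Submodule.mem_map, Set.mem_ofPred_eq,
    ContinuousLinearMap.coe_coe, ContinuousLinearMap.apply_apply, eq_comm (a := z)]

theorem apply_apply_mem_topologicalClosure_span (hE : Function.Injective E)
    (hMop : ∀ f ∈ A, ∀ (u : H) (y : X), E (Mop f u) y = f y * E u y)
    {T : H →L[ℂ] lp (fun _ : ι => H) 2} (hT : T ∈ multiplierColumns ι E A) (u : H) (j : ι) :
    T u j ∈ (Submodule.span ℂ {w : H | ∃ f ∈ A, w = Mop f u}).topologicalClosure := by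
  obtain ⟨G, hGA, hG⟩ := hT
  have hTj : T u j = Mop (G j) u := hE <| funext fun y => by rw [hG, hMop _ (hGA j)]
  exact hTj ▸ Submodule.le_topologicalClosure _ (Submodule.subset_span ⟨G j, hGA j, rfl⟩)

theorem tensorCLM_comp_mem_multiplierColumns
    (hMop : ∀ f ∈ A, ∀ (u : H) (y : X), E (Mop f u) y = f y * E u y) {f : X → ℂ} (hf : f ∈ A)
    (c : lp (fun _ : ι => ℂ) 2) : lp.tensorCLM c ∘L Mop f ∈ multiplierColumns ι E A :=
  ⟨fun j => c j • f, fun j => SMulMemClass.smul_mem _ hf,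
    fun u y j => by simp [hMop f hf, mul_assoc]⟩

theorem tensorCLM_mem_topologicalClosure_multiplierColumnsApply
    (hMop : ∀ f ∈ A, ∀ (u : H) (y : X), E (Mop f u) y = f y * E u y) {u z : H}
    (hz : z ∈ (Submodule.span ℂ {w : H | ∃ f ∈ A, w = Mop f u}).topologicalClosure)
    (c : lp (fun _ : ι => ℂ) 2) :
    lp.tensorCLM c z ∈ (multiplierColumnsApply ι E A u).topologicalClosure := by
  refine map_mem_closure (lp.tensorCLM c).continuous hz fun w hw => ?_
  refine Submodule.span_le (p := (multiplierColumnsApply ι E A u).comap (lp.tensorCLM c).toLinearMap) |>.2 ?_ hw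
  rintro _ ⟨f, hf, rfl⟩
  exact ⟨_, tensorCLM_comp_mem_multiplierColumns hMop hf c, rfl⟩

/-- The reproducing property in the form `M_G^* (k_y ⊗ c) = ⟨c, G(y)⟩ k_y`. -/
theorem inner_tensorCLM_kernel_apply {k : X → H} (hk : ∀ (f : H) (x : X), E f x = inner ℂ (k x) f)
    {T : H →L[ℂ] lp (fun _ : ι => H) 2} {G : ι → X → ℂ}
    (hG : ∀ (u : H) (y : X) (j : ι), E ((T u) j) y = G j y * E u y)
    (c : lp (fun _ : ι => ℂ) 2) (y : X) (u : H) :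
    inner ℂ (lp.tensorCLM c (k y)) (T u) = (∑' j, conj (c j) * G j y) * E u y := by
  simp only [lp.inner_tensorCLM_left, ← hk, hG, ← tsum_mul_right, mul_assoc]

theorem mem_vanishingColumns_iff {k : X → H} (hk : ∀ (f : H) (x : X), E f x = inner ℂ (k x) f)
    {x : κ → X} {v : κ → lp (fun _ : ι => ℂ) 2} {h : H} (hh : ∀ i, E h (x i) ≠ 0)
    {T : H →L[ℂ] lp (fun _ : ι => H) 2} :
    T ∈ vanishingColumns E A x v ↔
      T ∈ multiplierColumns ι E A ∧ ∀ i, inner ℂ (lp.tensorCLM (v i) (k (x i))) (T h) = 0 := by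
  constructor
  · rintro ⟨G, hGA, hG, hG0⟩
    exact ⟨⟨G, hGA, hG⟩, fun i => by rw [inner_tensorCLM_kernel_apply hk hG, hG0, zero_mul]⟩
  · rintro ⟨⟨G, hGA, hG⟩, h0⟩
    refine ⟨G, hGA, hG, fun i => ?_⟩
    have := h0 i
    rw [inner_tensorCLM_kernel_apply hk hG] at this
    exact (mul_eq_zero.1 this).resolve_right (hh i)

theorem setOf_vanishingColumns_apply_eq_inf_orthogonal (hE : Function.Injective E)
    {k : X → H} (hk : ∀ (f : H) (x : X), E f x = inner ℂ (k x) f)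
    (hMop : ∀ f ∈ A, ∀ (u : H) (y : X), E (Mop f u) y = f y * E u y)
    {x : κ → X} {v : κ → lp (fun _ : ι => ℂ) 2} {h : H} (hh : ∀ i, E h (x i) ≠ 0) {kL : κ → H}
    (hkL : ∀ i, k (x i) - kL i ∈
      (Submodule.span ℂ {w : H | ∃ f ∈ A, w = Mop f h}).topologicalClosureᗮ) :
    {z | ∃ T ∈ vanishingColumns E A x v, z = T h} =
      ↑(multiplierColumnsApply ι E A h ⊓
        (Submodule.span ℂ (Set.range fun i => lp.tensorCLM (v i) (kL i)))ᗮ) := by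
  have hkL' (T) (hT : T ∈ multiplierColumns ι E A) (i : κ) :
      inner ℂ (lp.tensorCLM (v i) (k (x i))) (T h) = inner ℂ (lp.tensorCLM (v i) (kL i)) (T h) :=
    lp.inner_tensorCLM_left_eq_of_sub_mem_orthogonal (hkL i) (v i)
      (apply_apply_mem_topologicalClosure_span hE hMop hT h)
  ext z
  simp only [Set.mem_ofPred_eq, Submodule.coe_inf, coe_multiplierColumnsApply, Set.mem_inter_iff,
    SetLike.mem_coe, Submodule.mem_orthogonal_span_range_iff]
  constructor
  · rintro ⟨T, hT, rfl⟩
    obtain ⟨hTA, h0⟩ := (mem_vanishingColumns_iff hk hh).1 hT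
    exact ⟨⟨T, hTA, rfl⟩, fun i => hkL' T hTA i ▸ h0 i⟩
  · rintro ⟨⟨T, hTA, rfl⟩, h0⟩
    exact ⟨T, (mem_vanishingColumns_iff hk hh).2 ⟨hTA, fun i => hkL' T hTA i ▸ h0 i⟩, rfl⟩

end MultiplierColumns

theorem stmt_11_general {X : Type*} {H : Type*} [NormedAddCommGroup H] [InnerProductSpace ℂ H]
    (E : H →ₗ[ℂ] (X → ℂ)) (hE : Function.Injective E)
    (k : X → H) (hk : ∀ (f : H) (x : X), E f x = (inner ℂ (k x) f : ℂ))
    (A : Subalgebra ℂ (X → ℂ)) (Mop : (X → ℂ) → (H →L[ℂ] H))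
    (hMop : ∀ f ∈ A, ∀ (u : H) (y : X), E (Mop f u) y = f y * E u y)
    {ι : Type*} (n : ℕ) (x : Fin n → X) (v : Fin n → lp (fun _ : ι => ℂ) 2)
    (h : H) (hh : ∀ i, E h (x i) ≠ 0) :
    let CAset : Set (H →L[ℂ] lp (fun _ : ι => H) 2) :=
      {T | ∃ G : ι → X → ℂ, (∀ j, G j ∈ A) ∧
        ∀ (u : H) (y : X) (j : ι), E ((T u) j) y = G j y * E u y}
    let Jset : Set (H →L[ℂ] lp (fun _ : ι => H) 2) :=
      {T | ∃ G : ι → X → ℂ, (∀ j, G j ∈ A) ∧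
        (∀ (u : H) (y : X) (j : ι), E ((T u) j) y = G j y * E u y) ∧
        ∀ i : Fin n, ∑' j : ι, (starRingEnd ℂ) (v i j) * G j (x i) = 0}
    let L : Submodule ℂ H :=
      (Submodule.span ℂ {w : H | ∃ f ∈ A, w = Mop f h}).topologicalClosure
    let CAh : Submodule ℂ (lp (fun _ : ι => H) 2) :=
      (Submodule.span ℂ {w | ∃ T ∈ CAset, w = T h}).topologicalClosure
    let Jh : Submodule ℂ (lp (fun _ : ι => H) 2) :=
      (Submodule.span ℂ {w | ∃ T ∈ Jset, w = T h}).topologicalClosure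
    ∀ kL : Fin n → H, (∀ i, kL i ∈ L ∧ k (x i) - kL i ∈ Lᗮ) →
      CAh ⊓ Jhᗮ = Submodule.span ℂ
        {w : lp (fun _ : ι => H) 2 | ∃ i : Fin n, ∀ j : ι, w j = v i j • kL i} := by
  intro CAset Jset L CAh Jh kL hkL
  set w : Fin n → lp (fun _ : ι => H) 2 := fun i => lp.tensorCLM (v i) (kL i)
  set W := Submodule.span ℂ (Set.range w)
  have hCA : {z | ∃ T ∈ CAset, z = T h} = multiplierColumnsApply ι E A h :=
    (coe_multiplierColumnsApply h).symm
  have hJ : {z | ∃ T ∈ Jset, z = T h} = ↑(multiplierColumnsApply ι E A h ⊓ Wᗮ) :=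
    setOf_vanishingColumns_apply_eq_inf_orthogonal hE hk hMop hh fun i => (hkL i).2
  have hWM : W ≤ (multiplierColumnsApply ι E A h).topologicalClosure :=
    Submodule.span_le.2 <| Set.range_subset_iff.2 fun i =>
      tensorCLM_mem_topologicalClosure_multiplierColumnsApply hMop (hkL i).1 (v i)
  have hw : {z : lp (fun _ : ι => H) 2 | ∃ i, ∀ j, z j = v i j • kL i} = Set.range w := by
    ext z
    simp only [Set.mem_ofPred_eq, Set.mem_range]
    exact exists_congr fun i => by rw [eq_comm, lp.ext_iff, funext_iff]; rfl
  have : FiniteDimensional ℂ W := FiniteDimensional.span_of_finite ℂ (Set.finite_range w)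
  simp only [CAh, Jh, hCA, hJ, Submodule.span_eq, hw]
  exact Submodule.topologicalClosure_inf_orthogonal_topologicalClosure_inf_orthogonal_eq hWM

/-- Let `A` be a unital algebra of multipliers on a reproducing kernel
Hilbert space `H` (realized via `E`, kernel vectors `k x`, multiplication operators
`Mop f`), and let `C(A)` be the space of column operators `T : H → H ⊗ ℓ²(ι)` over `A`.
Fix points `x 1, …, x n`, nonzero vectors `v 1, …, v n ∈ ℓ²(ι)`, and let
`J = {G ∈ C(A) : ⟨G(x_i), v_i⟩ = 0 ∀ i}`.  If `h ∈ H` satisfies `h(x_i) ≠ 0` for all `i`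
and `A` separates the points `x i`, then, with `L = closure(A·h)` and `P_L k_{x_i}` the
reproducing kernels of `L` (characterized by `kL i ∈ L` and `k (x i) - kL i ∈ Lᗮ`),
`closure(C(A)·h) ⊖ closure(J·h) = span{P_L k_{x_i} ⊗ v_i : i = 1..n}`. -/
theorem stmt_11 {X : Type*} {H : Type*} [NormedAddCommGroup H] [InnerProductSpace ℂ H]
    [CompleteSpace H] (E : H →ₗ[ℂ] (X → ℂ)) (hE : Function.Injective E)
    (k : X → H) (hk : ∀ (f : H) (x : X), E f x = (inner ℂ (k x) f : ℂ))
    (A : Subalgebra ℂ (X → ℂ)) (Mop : (X → ℂ) → (H →L[ℂ] H))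
    (hMop : ∀ f ∈ A, ∀ (u : H) (y : X), E (Mop f u) y = f y * E u y)
    {ι : Type*} (n : ℕ) (x : Fin n → X) (v : Fin n → lp (fun _ : ι => ℂ) 2)
    (hv : ∀ i, v i ≠ 0)
    (hsep : ∀ i j : Fin n, i ≠ j → ∃ f ∈ A, f (x i) ≠ f (x j))
    (h : H) (hh : ∀ i, E h (x i) ≠ 0) :
    let CAset : Set (H →L[ℂ] lp (fun _ : ι => H) 2) :=
      {T | ∃ G : ι → X → ℂ, (∀ j, G j ∈ A) ∧
        ∀ (u : H) (y : X) (j : ι), E ((T u) j) y = G j y * E u y}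
    let Jset : Set (H →L[ℂ] lp (fun _ : ι => H) 2) :=
      {T | ∃ G : ι → X → ℂ, (∀ j, G j ∈ A) ∧
        (∀ (u : H) (y : X) (j : ι), E ((T u) j) y = G j y * E u y) ∧
        ∀ i : Fin n, ∑' j : ι, (starRingEnd ℂ) (v i j) * G j (x i) = 0}
    let L : Submodule ℂ H :=
      (Submodule.span ℂ {w : H | ∃ f ∈ A, w = Mop f h}).topologicalClosure
    let CAh : Submodule ℂ (lp (fun _ : ι => H) 2) :=
      (Submodule.span ℂ {w | ∃ T ∈ CAset, w = T h}).topologicalClosure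
    let Jh : Submodule ℂ (lp (fun _ : ι => H) 2) :=
      (Submodule.span ℂ {w | ∃ T ∈ Jset, w = T h}).topologicalClosure
    ∀ kL : Fin n → H, (∀ i, kL i ∈ L ∧ k (x i) - kL i ∈ Lᗮ) →
      CAh ⊓ Jhᗮ = Submodule.span ℂ
        {w : lp (fun _ : ι => H) 2 | ∃ i : Fin n, ∀ j : ι, w j = v i j • kL i} :=
  stmt_11_general E hE k hk A Mop hMop n x v h hh
end
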